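/- arXiv:1112.5769 — 2 statements merged into one kernel-verified Lean document; each statement's English description precedes it below -/
import Mathlib

section
/- Let $q \geq 1$ and suppose $x_1, \dots, x_q > 0$. For $1 \leq k \leq q$, let $e_k(x_1,\dots,x_q)$ denote the $k$-th elementary symmetric polynomial. Then for each $k \geq 2$, the function $\phi_k(x_1,\dots,x_q) = e_k(x_1,\dots,x_q)/e_{k-1}(x_1,\dots,x_q)$ is nondecreasing in each variable (on the domain of positive variables). -/
open Finset

/-- `k`-th elementary symmetric polynomial of `x : Fin q → ℝ`. -/
noncomputable def esymm (q k : ℕ) (x : Fin q → ℝ) : ℝ :=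
  ∑ s ∈ Finset.powersetCard k (Finset.univ : Finset (Fin q)), ∏ i ∈ s, x i

/-!
Newton's inequality `e_{k+2} e_k ≤ e_{k+1}^2` for nonnegative variables is proved by induction on
the number of variables through `e_{k+1}(a, s) = a e_k(s) + e_{k+1}(s)`. The induction step also
needs `e_k e_{k+3} ≤ e_{k+1} e_{k+2}`, which follows from two Newton inequalities for `s` because
nonnegative variables with `e_k = 0` also have `e_{k+1} = 0`.

Changing one variable from `a` to `b`, with `s` the others, and cross-multiplying the two ratios
`e_{k+2}/e_{k+1}` leaves `(b - a) (e_{k+1}(s)^2 - e_{k+2}(s) e_k(s)) ≥ 0`.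
-/

theorem mul_le_mul_of_mul_le_sq_of_mul_le_sq {a b c d : ℝ}
    (hb : 0 ≤ b) (hc : 0 ≤ c) (hd : 0 ≤ d) (hac : a * c ≤ b ^ 2) (hbd : b * d ≤ c ^ 2)
    (hb0 : b = 0 → c = 0) (hc0 : c = 0 → d = 0) :
    a * d ≤ b * c := by
  rcases hc.eq_or_lt with hc | hc
  · simp [hc0 hc.symm, ← hc]
  rcases hb.eq_or_lt with hb | hb
  · exact absurd (hb0 hb.symm) hc.ne'
  have h := mul_le_mul hac hbd (by positivity) (by positivity)
  refine le_of_mul_le_mul_right ?_ (mul_pos hb hc)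
  nlinarith

namespace Multiset

section CommSemiring

variable {R : Type*} [CommSemiring R]

@[simp]
theorem esymm_zero_right (s : Multiset R) : s.esymm 0 = 1 := by
  simp [esymm]

@[simp]
theorem esymm_zero_left (k : ℕ) : (0 : Multiset R).esymm (k + 1) = 0 := by
  simp [esymm, powersetCard_zero_right]

theorem esymm_cons_succ (a : R) (s : Multiset R) (k : ℕ) :
    (a ::ₘ s).esymm (k + 1) = a * s.esymm k + s.esymm (k + 1) := by
  simp [esymm, map_map, sum_map_mul_left, add_comm]

end CommSemiring

variable {s : Multiset ℝ}

theorem esymm_nonneg (hs : ∀ x ∈ s, 0 ≤ x) (k : ℕ) : 0 ≤ s.esymm k :=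
  sum_nonneg fun _ ht ↦ by
    obtain ⟨t, hts, rfl⟩ := mem_map.1 ht
    exact prod_nonneg fun x hx ↦ hs x (mem_of_le (mem_powersetCard.1 hts).1 hx)

theorem esymm_succ_eq_zero (hs : ∀ x ∈ s, 0 ≤ x) {k : ℕ} (h : s.esymm k = 0) :
    s.esymm (k + 1) = 0 := by
  induction s using Multiset.induction_on generalizing k with
  | empty => simp
  | cons a s ih =>
    have hs' : ∀ x ∈ s, 0 ≤ x := fun x hx ↦ hs x (mem_cons_of_mem hx)
    cases k with
    | zero => simp at h
    | succ m =>
      rw [esymm_cons_succ] at h ⊢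
      have hm := mul_nonneg (hs a (mem_cons_self a s)) (esymm_nonneg hs' m)
      have h1 : s.esymm (m + 1) = 0 := by linarith [esymm_nonneg hs' (m + 1)]
      rw [h1, ih hs' h1, mul_zero, add_zero]

theorem esymm_add_two_mul_esymm_le_sq (hs : ∀ x ∈ s, 0 ≤ x) (k : ℕ) :
    s.esymm (k + 2) * s.esymm k ≤ s.esymm (k + 1) ^ 2 := by
  induction s using Multiset.induction_on generalizing k with
  | empty => simp
  | cons a s ih =>
    have hs' : ∀ x ∈ s, 0 ≤ x := fun x hx ↦ hs x (mem_cons_of_mem hx)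
    have ha : 0 ≤ a := hs a (mem_cons_self a s)
    have hnn := esymm_nonneg hs'
    cases k with
    | zero =>
      have h := ih hs' 0
      simp only [esymm_cons_succ, esymm_zero_right, zero_add, mul_one] at h ⊢
      nlinarith [mul_nonneg ha (hnn 1)]
    | succ m =>
      simp only [esymm_cons_succ]
      have cross : s.esymm m * s.esymm (m + 3) ≤ s.esymm (m + 1) * s.esymm (m + 2) :=
        mul_le_mul_of_mul_le_sq_of_mul_le_sq (hnn _) (hnn _) (hnn _) (by linarith [ih hs' m])
          (by linarith [ih hs' (m + 1)]) (esymm_succ_eq_zero hs') (esymm_succ_eq_zero hs')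
      nlinarith [mul_le_mul_of_nonneg_left (ih hs' m) (mul_nonneg ha ha), ih hs' (m + 1),
        mul_le_mul_of_nonneg_left cross ha]

theorem esymm_div_esymm_cons_le (hs : ∀ x ∈ s, 0 ≤ x) {a b : ℝ} (ha : 0 ≤ a)
    (hab : a ≤ b) (k : ℕ) :
    (a ::ₘ s).esymm (k + 2) / (a ::ₘ s).esymm (k + 1) ≤
      (b ::ₘ s).esymm (k + 2) / (b ::ₘ s).esymm (k + 1) := by
  have hnn := esymm_nonneg hs
  have hb : 0 ≤ b := ha.trans hab
  simp only [esymm_cons_succ]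
  rcases (add_nonneg (mul_nonneg ha (hnn k)) (hnn (k + 1))).eq_or_lt with hda | hda
  -- a vanishing denominator makes the left side the junk value `x / 0 = 0`
  · rw [← hda, div_zero]
    exact div_nonneg (add_nonneg (mul_nonneg hb (hnn _)) (hnn _))
      (add_nonneg (mul_nonneg hb (hnn _)) (hnn _))
  have hdb : 0 < b * s.esymm k + s.esymm (k + 1) := by nlinarith [hnn k]
  rw [div_le_div_iff₀ hda hdb]
  nlinarith [mul_nonneg (sub_nonneg.2 hab) (sub_nonneg.2 (esymm_add_two_mul_esymm_le_sq hs k))]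

end Multiset

theorem esymm_eq_esymm_cons {q : ℕ} (k : ℕ) (x : Fin q → ℝ) (j : Fin q) :
    esymm q k x = (x j ::ₘ (univ.erase j).val.map x).esymm k := by
  rw [esymm, ← Finset.esymm_map_val, ← Multiset.map_cons, erase_val,
    Multiset.cons_erase (mem_univ j)]

theorem stmt0_general (q : ℕ) (k : ℕ) (hk : 2 ≤ k)
    (x y : Fin q → ℝ) (hx : ∀ i, 0 < x i)
    (j : Fin q) (hxy : x j ≤ y j) (heq : ∀ i, i ≠ j → x i = y i) :
    esymm q k x / esymm q (k - 1) x ≤ esymm q k y / esymm q (k - 1) y := by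
  obtain ⟨k, rfl⟩ : ∃ m, k = m + 2 := ⟨k - 2, by omega⟩
  have hyx : (univ.erase j).val.map y = (univ.erase j).val.map x :=
    Multiset.map_congr rfl fun i hi ↦ (heq i (ne_of_mem_erase (s := univ) hi)).symm
  rw [show k + 2 - 1 = k + 1 from rfl]
  simp only [esymm_eq_esymm_cons _ x j, esymm_eq_esymm_cons _ y j, hyx]
  refine Multiset.esymm_div_esymm_cons_le (fun t ht ↦ ?_) (hx j).le hxy k
  obtain ⟨i, -, rfl⟩ := Multiset.mem_map.1 ht
  exact (hx i).le

/-- For positive variables, `φ_k = e_k / e_{k-1}` (`k ≥ 2`) is nondecreasing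
in each variable. -/
theorem stmt0 (q : ℕ) (hq : 1 ≤ q) (k : ℕ) (hk : 2 ≤ k) (hkq : k ≤ q)
    (x y : Fin q → ℝ) (hx : ∀ i, 0 < x i) (hy : ∀ i, 0 < y i)
    (j : Fin q) (hxy : x j ≤ y j) (heq : ∀ i, i ≠ j → x i = y i) :
    esymm q k x / esymm q (k - 1) x ≤ esymm q k y / esymm q (k - 1) y :=
  stmt0_general q k hk x y hx j hxy heq
end

section
/- Let $b > 0$, $c > b$, and $y \in \mathbb{R}$. Then $\int_0^1 \frac{t^b (1-t)^{c-b-1}}{(1+t^2 y^2)^2}\, dt = \frac{\Gamma(b+1)\Gamma(c-b)}{\Gamma(c+1)}\, {}_3F_2\!\left(2, \tfrac{b+1}{2}, \tfrac{b+2}{2}; \tfrac{c+1}{2}, \tfrac{c+2}{2}; -y^2\right)$ for $|y| < 1$. -/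
/-!
For `t ∈ (0, 1]` and `|y| < 1` expand `(1 + t²y²)⁻² = ∑ (n + 1) (-y²)ⁿ t²ⁿ`. The series is
dominated by `∑ (n + 1) y²ⁿ` times the integrable beta weight `t^b (1-t)^(c-b-1)`, so it
integrates termwise, and the `n`-th term is the beta integral `B(b + 1 + 2n, c - b)`. Writing
`Γ(a + 2n) = (a)₂ₙ Γ(a)` and using the duplication `(a)₂ₙ = 4ⁿ (a/2)ₙ ((a+1)/2)ₙ`, the powers
of `4` cancel, and `n + 1 = (2)ₙ / n!` produces the `₃F₂` coefficient.
-/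

open Real MeasureTheory

noncomputable def poch (a : ℝ) (n : ℕ) : ℝ := Polynomial.eval a (ascPochhammer ℝ n)

section Pochhammer

lemma poch_zero (a : ℝ) : poch a 0 = 1 := by simp [poch]

lemma poch_succ (a : ℝ) (n : ℕ) : poch a (n + 1) = poch a n * (a + n) := by
  simp [poch, ascPochhammer_succ_right]

lemma poch_pos {a : ℝ} (ha : 0 < a) (n : ℕ) : 0 < poch a n :=
  ascPochhammer_pos n a ha

lemma poch_two (n : ℕ) : poch 2 n = (n + 1) * n.factorial := by
  have h := ascPochhammer_eval_succ (S := ℝ) n 1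
  push_cast at h
  rw [one_add_one_eq_two, one_mul, ascPochhammer_eval_one, add_comm] at h
  exact h

lemma poch_two_mul (a : ℝ) (n : ℕ) :
    poch a (2 * n) = 4 ^ n * poch (a / 2) n * poch ((a + 1) / 2) n := by
  induction n with
  | zero => simp [poch_zero]
  | succ n ih =>
    rw [show 2 * (n + 1) = 2 * n + 1 + 1 by ring, poch_succ, poch_succ, ih, poch_succ, poch_succ]
    push_cast
    ring

lemma Real.Gamma_add_nat_eq_poch_mul {a : ℝ} (ha : 0 < a) (n : ℕ) :
    Real.Gamma (a + n) = poch a n * Real.Gamma a := by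
  induction n with
  | zero => simp [poch_zero]
  | succ n ih =>
    rw [Nat.cast_succ, ← add_assoc, Real.Gamma_add_one (by positivity), ih, poch_succ]
    ring

end Pochhammer

section Beta

lemma Complex.ofReal_rpow_mul_one_sub_rpow {t : ℝ} (ht : t ∈ Set.Icc 0 1) (p q : ℝ) :
    ((t ^ (p - 1) * (1 - t) ^ (q - 1) : ℝ) : ℂ) =
      (t : ℂ) ^ ((p : ℂ) - 1) * (1 - t) ^ ((q : ℂ) - 1) := by
  push_cast
  rw [Complex.ofReal_cpow ht.1, Complex.ofReal_cpow (sub_nonneg.2 ht.2)]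
  push_cast
  rfl

lemma Complex.betaIntegral_ofReal (p q : ℝ) :
    Complex.betaIntegral p q =
      ((∫ t in (0 : ℝ)..1, t ^ (p - 1) * (1 - t) ^ (q - 1) : ℝ) : ℂ) := by
  rw [Complex.betaIntegral, ← intervalIntegral.integral_ofReal]
  refine intervalIntegral.integral_congr fun t ht => ?_
  rw [Set.uIcc_of_le zero_le_one] at ht
  exact (Complex.ofReal_rpow_mul_one_sub_rpow ht p q).symm

lemma intervalIntegrable_rpow_mul_one_sub_rpow {p q : ℝ} (hp : 0 < p) (hq : 0 < q) :
    IntervalIntegrable (fun t : ℝ => t ^ (p - 1) * (1 - t) ^ (q - 1)) volume 0 1 := by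
  have h := Complex.betaIntegral_convergent (u := p) (v := q) (by simpa) (by simpa)
  rw [intervalIntegrable_iff_integrableOn_Ioc_of_le zero_le_one] at h ⊢
  refine IntegrableOn.congr_fun (Integrable.re h) (fun t ht => ?_) measurableSet_Ioc
  rw [← Complex.ofReal_rpow_mul_one_sub_rpow (Set.Ioc_subset_Icc_self ht)]
  exact Complex.ofReal_re _

lemma integral_rpow_mul_one_sub_rpow {p q : ℝ} (hp : 0 < p) (hq : 0 < q) :
    ∫ t in (0 : ℝ)..1, t ^ (p - 1) * (1 - t) ^ (q - 1) =
      Real.Gamma p * Real.Gamma q / Real.Gamma (p + q) := by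
  have h := Complex.Gamma_mul_Gamma_eq_betaIntegral (s := p) (t := q) (by simpa) (by simpa)
  rw [Complex.betaIntegral_ofReal, Complex.Gamma_ofReal, Complex.Gamma_ofReal,
    ← Complex.ofReal_add, Complex.Gamma_ofReal] at h
  rw [eq_div_iff (Real.Gamma_pos_of_pos (add_pos hp hq)).ne', mul_comm]
  exact_mod_cast h.symm

end Beta

lemma hasSum_succ_mul_neg_pow {x : ℝ} (hx : |x| < 1) :
    HasSum (fun n : ℕ => ((n : ℝ) + 1) * (-x) ^ n) (1 / (1 + x) ^ 2) := by
  have h := hasSum_choose_mul_geometric_of_norm_lt_one 1 (r := -x) (by simpa using hx)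
  simpa [Nat.choose_one_right, sub_neg_eq_add] using h

lemma div_one_add_mul_sq_eq_tsum {x z : ℝ} (h : |x * z| < 1) (w : ℝ) :
    w / (1 + x * z) ^ 2 = ∑' n : ℕ, ((n : ℝ) + 1) * (-z) ^ n * (w * x ^ n) := by
  rw [div_eq_mul_one_div, ← ((hasSum_succ_mul_neg_pow h).mul_left w).tsum_eq]
  congr 1 with n
  rw [show -(x * z) = -z * x by ring, mul_pow]
  ring

lemma integral_tsum_mul_pow {α : Type*} [MeasurableSpace α] {μ : Measure α} {w u : α → ℝ}
    {a : ℕ → ℝ} (hw : Integrable w μ) (hu : AEStronglyMeasurable u μ)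
    (hu1 : ∀ᵐ t ∂μ, |u t| ≤ 1) (ha : Summable fun n => |a n|) :
    ∫ t, ∑' n, a n * (w t * u t ^ n) ∂μ = ∑' n, a n * ∫ t, w t * u t ^ n ∂μ := by
  have hbound : ∀ n, ∀ᵐ t ∂μ, ‖w t * u t ^ n‖ ≤ ‖w t‖ := fun n => hu1.mono fun t ht => by
    rw [norm_mul, norm_pow, Real.norm_eq_abs (u t)]
    exact mul_le_of_le_one_right (norm_nonneg _) (pow_le_one₀ (abs_nonneg _) ht)
  have hint : ∀ n, Integrable (fun t => w t * u t ^ n) μ := fun n =>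
    hw.mono (hw.aestronglyMeasurable.mul (hu.pow n)) (hbound n)
  have hnorm : ∀ n, ∫ t, ‖a n * (w t * u t ^ n)‖ ∂μ ≤ |a n| * ∫ t, ‖w t‖ ∂μ := fun n => by
    simp_rw [norm_mul (a n), Real.norm_eq_abs (a n)]
    rw [integral_const_mul]
    exact mul_le_mul_of_nonneg_left
      (integral_mono_ae (hint n).norm hw.norm (hbound n)) (abs_nonneg _)
  have hsum : Summable fun n => ∫ t, ‖a n * (w t * u t ^ n)‖ ∂μ :=
    .of_nonneg_of_le (fun n => integral_nonneg fun _ => norm_nonneg _) hnorm (ha.mul_right _)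
  rw [← integral_tsum_of_summable_integral_norm (fun n => (hint n).const_mul (a n)) hsum]
  simp_rw [integral_const_mul]

section HypergeometricTerm

variable {b c : ℝ}

lemma integral_rpow_mul_one_sub_rpow_mul_sq_pow (hb : 0 < b) (hc : b < c) (n : ℕ) :
    ∫ t in (0 : ℝ)..1, t ^ b * (1 - t) ^ (c - b - 1) * (t ^ 2) ^ n =
      Real.Gamma (b + 1 + (2 * n : ℕ)) * Real.Gamma (c - b) /
        Real.Gamma (c + 1 + (2 * n : ℕ)) := by
  have hbeta := integral_rpow_mul_one_sub_rpow (p := b + 1 + (2 * n : ℕ)) (q := c - b)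
    (by positivity) (sub_pos.2 hc)
  rw [show b + 1 + (2 * n : ℕ) + (c - b) = c + 1 + (2 * n : ℕ) by ring] at hbeta
  rw [← hbeta]
  refine intervalIntegral.integral_congr fun t ht => ?_
  rw [Set.uIcc_of_le zero_le_one] at ht
  rw [show b + 1 + ((2 * n : ℕ) : ℝ) - 1 = b + (2 * n : ℕ) by ring,
    Real.rpow_add_natCast' ht.1 (add_pos_of_pos_of_nonneg hb (Nat.cast_nonneg _)).ne',
    pow_mul]
  ring

lemma succ_mul_Gamma_ratio_eq (hb : 0 < b) (hc : b < c) (n : ℕ) :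
    ((n : ℝ) + 1) *
        (Real.Gamma (b + 1 + (2 * n : ℕ)) * Real.Gamma (c - b) /
          Real.Gamma (c + 1 + (2 * n : ℕ))) =
      Real.Gamma (b + 1) * Real.Gamma (c - b) / Real.Gamma (c + 1) *
        (poch 2 n * poch ((b + 1) / 2) n * poch ((b + 2) / 2) n /
          (poch ((c + 1) / 2) n * poch ((c + 2) / 2) n * n.factorial)) := by
  have hc1 : 0 < c + 1 := by linarith
  rw [Real.Gamma_add_nat_eq_poch_mul (by linarith) (2 * n), Real.Gamma_add_nat_eq_poch_mul hc1,
    poch_two_mul, poch_two_mul, poch_two, show b + 1 + 1 = b + 2 by ring,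
    show c + 1 + 1 = c + 2 by ring]
  have := Real.Gamma_pos_of_pos hc1
  have := poch_pos (a := (c + 1) / 2) (by linarith) n
  have := poch_pos (a := (c + 2) / 2) (by linarith) n
  field_simp

end HypergeometricTerm

/-- For `b > 0`, `c > b` and `|y| < 1`:
`∫_0^1 t^b (1-t)^{c-b-1}/(1+t²y²)² dt
  = Γ(b+1)Γ(c-b)/Γ(c+1) · ₃F₂(2,(b+1)/2,(b+2)/2;(c+1)/2,(c+2)/2;-y²)`. -/
theorem stmt14 (b c y : ℝ) (hb : 0 < b) (hc : b < c) (hy : |y| < 1) :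
    (∫ t in (0:ℝ)..1, t ^ b * (1 - t) ^ (c - b - 1) / (1 + t ^ 2 * y ^ 2) ^ 2) =
      Real.Gamma (b + 1) * Real.Gamma (c - b) / Real.Gamma (c + 1) *
        ∑' n : ℕ,
          poch 2 n * poch ((b + 1) / 2) n * poch ((b + 2) / 2) n /
            (poch ((c + 1) / 2) n * poch ((c + 2) / 2) n * n.factorial) *
            (-y ^ 2) ^ n := by
  set w : ℝ → ℝ := fun t => t ^ b * (1 - t) ^ (c - b - 1)
  have hy2 : |y ^ 2| < 1 := by rw [abs_pow]; exact pow_lt_one₀ (abs_nonneg y) hy two_ne_zero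
  have hexpand : ∀ t ∈ Set.Ioc (0 : ℝ) 1, w t / (1 + t ^ 2 * y ^ 2) ^ 2 =
      ∑' n : ℕ, ((n : ℝ) + 1) * (-y ^ 2) ^ n * (w t * (t ^ 2) ^ n) := fun t ht => by
    refine div_one_add_mul_sq_eq_tsum ?_ (w t)
    rw [abs_mul, abs_of_nonneg (sq_nonneg t)]
    exact (mul_le_of_le_one_left (abs_nonneg _) (pow_le_one₀ ht.1.le ht.2)).trans_lt hy2
  have hw : Integrable w (volume.restrict (Set.Ioc 0 1)) := by
    have h := intervalIntegrable_rpow_mul_one_sub_rpow (p := b + 1) (q := c - b)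
      (by linarith) (sub_pos.2 hc)
    simp only [add_sub_cancel_right] at h
    exact (intervalIntegrable_iff_integrableOn_Ioc_of_le zero_le_one).1 h
  have hsq : ∀ᵐ t ∂volume.restrict (Set.Ioc (0 : ℝ) 1), |t ^ 2| ≤ 1 :=
    ae_restrict_of_forall_mem measurableSet_Ioc fun t ht => by
      rw [abs_of_nonneg (sq_nonneg t)]
      exact pow_le_one₀ ht.1.le ht.2
  rw [intervalIntegral.integral_of_le zero_le_one,
    setIntegral_congr_fun measurableSet_Ioc hexpand,
    integral_tsum_mul_pow hw (by fun_prop) hsq (hasSum_succ_mul_neg_pow hy2).summable.abs,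
    ← tsum_mul_left]
  congr 1 with n
  rw [← intervalIntegral.integral_of_le zero_le_one,
    integral_rpow_mul_one_sub_rpow_mul_sq_pow hb hc]
  linear_combination (-y ^ 2) ^ n * succ_mul_Gamma_ratio_eq hb hc n
end
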